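/- arXiv:2402.15747 — 3 statements merged into one kernel-verified Lean document; each statement's English description precedes it below -/
import Mathlib

section
/- Let d ≥ 3 be odd and squarefree and let k be an integer with gcd(k, d) = f > 1. Then s_{d,k} = Σ_{1 ≤ a ≤ d, (a/d)=1} ζ_d^{ka} equals μ(d/f)·φ(f)/2, where μ is the Möbius function and φ is Euler's totient function. -/
open Finset Polynomial

noncomputable def zeta (d : ℕ) : ℂ := Complex.exp (2 * Real.pi * Complex.I / d)

/-- `D = (-1)^((d-1)/2) * d`. -/
def Dint (d : ℕ) : ℤ := (-1) ^ ((d - 1) / 2) * d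

/-- the principal square root of `D = (-1)^((d-1)/2) d` (equal to `i√d` when `D < 0`). -/
noncomputable def sqrtD (d : ℕ) : ℂ :=
  if d % 4 = 1 then (Real.sqrt d : ℂ) else Complex.I * (Real.sqrt d : ℂ)

/-!
Let `s₊`, `s₋` be the sums of `ζ^(ka)` over the residues `a` mod `d` with `J(a | d) = 1`,
resp. `-1`. Then `s₊ + s₋` is the Ramanujan sum `c_d(k)`, which Möbius inversion evaluates as
`Σ_{m ∣ (k, d)} μ(d/m) m = μ(d/f) φ(f)` for squarefree `d`. And `s₊ = s₋`: for an odd prime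
`p ∣ f`, the Chinese remainder theorem gives `b` that is a nonresidue mod `p` and `≡ 1 mod d/p`,
so `J(b | d) = -1` while `kb ≡ k mod d`; multiplying by `b` exchanges the two sets of residues
and fixes `ζ^(ka)`.
-/

open scoped ArithmeticFunction.Moebius NumberTheorySymbols Nat

theorem sum_divisors_filter_dvd_moebius (R : Type*) [Ring R] {d : ℕ} (hd : d ≠ 0) (a : ℕ) :
    ∑ e ∈ d.divisors with e ∣ a, (μ e : R) = if a.Coprime d then 1 else 0 := by
  have hdiv : {e ∈ d.divisors | e ∣ a} = (a.gcd d).divisors := by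
    ext e
    simp [Nat.dvd_gcd_iff, hd, and_comm]
  have hsum := congr_arg (· (a.gcd d)) (ArithmeticFunction.coe_moebius_mul_coe_zeta (R := R))
  simp only [ArithmeticFunction.coe_mul_zeta_apply, ArithmeticFunction.one_apply,
    ArithmeticFunction.intCoe_apply] at hsum
  rw [hdiv, hsum]

theorem sum_divisors_moebius_div_mul_eq_totient (R : Type*) [Ring R] (n : ℕ) :
    ∑ m ∈ n.divisors, (μ (n / m) : R) * m = φ n := by
  rcases n.eq_zero_or_pos with rfl | hn
  · simp
  rw [← Nat.sum_divisorsAntidiagonal' (fun a b => (μ a : R) * b)]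
  exact (ArithmeticFunction.sum_eq_iff_sum_mul_moebius_eq (f := fun n => (φ n : R)) (g := (↑))).1
    (fun n _ => by rw [← Nat.cast_sum, Nat.sum_totient]) n hn

theorem moebius_div_eq_mul_moebius_div {d f m : ℕ} (hsf : Squarefree d) (hfd : f ∣ d)
    (hmf : m ∣ f) : μ (d / m) = μ (d / f) * μ (f / m) := by
  obtain ⟨g, rfl⟩ := hfd
  obtain ⟨n, rfl⟩ := hmf
  have hm : 0 < m := Nat.pos_of_ne_zero (left_ne_zero_of_mul (left_ne_zero_of_mul hsf.ne_zero))
  have hn : 0 < n := Nat.pos_of_ne_zero (right_ne_zero_of_mul (left_ne_zero_of_mul hsf.ne_zero))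
  rw [Nat.mul_div_cancel_left _ (Nat.mul_pos hm hn), Nat.mul_div_cancel_left _ hm, mul_assoc,
    Nat.mul_div_cancel_left _ hm, mul_comm]
  rw [mul_assoc] at hsf
  exact ArithmeticFunction.isMultiplicative_moebius.map_mul_of_coprime
    (Nat.coprime_of_squarefree_mul hsf.of_mul_right).symm

theorem divisors_filter_natCast_dvd_eq_divisors_gcd {n : ℕ} (hn : n ≠ 0) (k : ℤ) :
    {m ∈ n.divisors | ((m : ℕ) : ℤ) ∣ k} = (k.gcd n).divisors := by
  ext m
  simp [Int.gcd, Nat.dvd_gcd_iff, Int.natCast_dvd, hn, and_comm]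

theorem sum_range_filter_dvd {M : Type*} [AddCommMonoid M] {e n : ℕ} (h : e ∣ n) (g : ℕ → M) :
    ∑ a ∈ range n with e ∣ a, g a = ∑ b ∈ range (n / e), g (e * b) := by
  obtain ⟨m, rfl⟩ := h
  rcases eq_or_ne e 0 with rfl | he
  · simp
  rw [Nat.mul_div_cancel_left _ (Nat.pos_of_ne_zero he)]
  refine sum_nbij' (· / e) (e * ·) ?_ ?_ ?_ ?_ ?_
  · simp only [mem_filter, mem_range]
    exact fun a ha => Nat.div_lt_of_lt_mul ha.1
  · simp +contextual [Nat.pos_of_ne_zero he]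
  · simp +contextual [Nat.mul_div_cancel']
  · simp [he]
  · simp +contextual [Nat.mul_div_cancel']

theorem sum_range_eq_sum_zmod {M : Type*} [AddCommMonoid M] (n : ℕ) [NeZero n] (g : ℕ → M) :
    ∑ a ∈ range n, g a = ∑ x : ZMod n, g x.val := by
  obtain ⟨m, rfl⟩ := Nat.exists_eq_succ_of_ne_zero (NeZero.ne n)
  exact (Fin.sum_univ_eq_sum_range g _).symm

theorem sum_range_mul_mod {M : Type*} [AddCommMonoid M] {n b : ℕ} (hb : b.Coprime n)
    (g : ℕ → M) : ∑ a ∈ range n, g (b * a % n) = ∑ a ∈ range n, g a := by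
  rcases eq_or_ne n 0 with rfl | hn
  · simp
  have : NeZero n := ⟨hn⟩
  have hval : ∀ x : ZMod n, (ZMod.unitOfCoprime b hb * x : ZMod n).val = b * x.val % n := by
    intro x
    rw [ZMod.coe_unitOfCoprime, ZMod.val_mul, ZMod.val_natCast, Nat.mod_mul_mod]
  simp only [sum_range_eq_sum_zmod n, ← hval]
  exact Equiv.sum_comp (Units.mulLeft (ZMod.unitOfCoprime b hb)) (fun x => g x.val)

theorem sum_Icc_one_eq_sum_range {M : Type*} [AddCommMonoid M] (n : ℕ) (g : ℕ → M)
    (h : g n = g 0) : ∑ a ∈ Icc 1 n, g a = ∑ a ∈ range n, g a := by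
  rcases n with _ | m
  · simp
  rw [← Ico_add_one_right_eq_Icc, sum_Ico_eq_sum_range, Nat.add_sub_cancel, sum_range_succ,
    sum_range_succ', add_comm 1, h]
  simp only [add_comm 1]

section RootsOfUnity

variable {K : Type*} [Field K] {ζ : K} {n : ℕ}

theorem IsPrimitiveRoot.zpow_eq_zpow_of_modEq (hζ : IsPrimitiveRoot ζ n) (hn : n ≠ 0) {a b : ℤ}
    (h : a ≡ b [ZMOD n]) : ζ ^ a = ζ ^ b := by
  have := (hζ.zpow_eq_one_iff_dvd (a - b)).2 h.symm.dvd
  rwa [zpow_sub₀ (hζ.ne_zero hn), div_eq_one_iff_eq (zpow_ne_zero _ (hζ.ne_zero hn))] at this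

theorem IsPrimitiveRoot.sum_range_zpow_mul (hζ : IsPrimitiveRoot ζ n) (k : ℤ) :
    ∑ a ∈ range n, ζ ^ (k * a) = if (n : ℤ) ∣ k then (n : K) else 0 := by
  simp_rw [zpow_mul, zpow_natCast]
  split_ifs with h
  · simp [(hζ.zpow_eq_one_iff_dvd k).2 h]
  · rw [geom_sum_eq (mt (hζ.zpow_eq_one_iff_dvd k).1 h), ← zpow_natCast, ← zpow_mul, mul_comm,
      zpow_mul, hζ.zpow_eq_one, one_zpow, sub_self, zero_div]

theorem IsPrimitiveRoot.sum_range_filter_dvd_zpow_mul (hζ : IsPrimitiveRoot ζ n) (hn : n ≠ 0)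
    {e : ℕ} (he : e ∣ n) (k : ℤ) :
    ∑ a ∈ range n with e ∣ a, ζ ^ (k * a) =
      if ((n / e : ℕ) : ℤ) ∣ k then ((n / e : ℕ) : K) else 0 := by
  have hζe : IsPrimitiveRoot (ζ ^ e) (n / e) :=
    hζ.pow (Nat.pos_of_ne_zero hn) (Nat.mul_div_cancel' he).symm
  rw [sum_range_filter_dvd he, ← hζe.sum_range_zpow_mul k]
  refine sum_congr rfl fun b _ => ?_
  rw [← zpow_natCast, ← zpow_mul]
  push_cast
  ring_nf

def ramanujanSum (ζ : K) (n : ℕ) (k : ℤ) : K :=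
  ∑ a ∈ range n with a.Coprime n, ζ ^ (k * a)

theorem IsPrimitiveRoot.ramanujanSum_eq_sum_moebius (hζ : IsPrimitiveRoot ζ n) (hn : n ≠ 0)
    (k : ℤ) : ramanujanSum ζ n k = ∑ m ∈ (k.gcd n).divisors, (μ (n / m) : K) * m := by
  calc ramanujanSum ζ n k
      = ∑ a ∈ range n, ∑ e ∈ n.divisors with e ∣ a, (μ e : K) * ζ ^ (k * a) := by
        rw [ramanujanSum, sum_filter]
        refine sum_congr rfl fun a _ => ?_
        rw [← sum_mul, sum_divisors_filter_dvd_moebius K hn, ite_mul, one_mul, zero_mul]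
    _ = ∑ e ∈ n.divisors, (μ e : K) * ∑ a ∈ range n with e ∣ a, ζ ^ (k * a) := by
        simp_rw [mul_sum]
        exact sum_comm' fun a e => by simp only [mem_filter]; tauto
    _ = ∑ m ∈ n.divisors, (μ (n / m) : K) * if (m : ℤ) ∣ k then (m : K) else 0 := by
        rw [← Nat.sum_div_divisors n fun m => (μ (n / m) : K) * if (m : ℤ) ∣ k then (m : K) else 0]
        refine sum_congr rfl fun e he => ?_
        rw [hζ.sum_range_filter_dvd_zpow_mul hn (Nat.dvd_of_mem_divisors he),
          Nat.div_div_self (Nat.dvd_of_mem_divisors he) hn]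
    _ = ∑ m ∈ (k.gcd n).divisors, (μ (n / m) : K) * m := by
        simp_rw [mul_ite, mul_zero]
        rw [← sum_filter, divisors_filter_natCast_dvd_eq_divisors_gcd hn]

theorem IsPrimitiveRoot.ramanujanSum_eq_moebius_mul_totient (hζ : IsPrimitiveRoot ζ n)
    (hn : Squarefree n) (k : ℤ) :
    ramanujanSum ζ n k = μ (n / k.gcd n) * φ (k.gcd n) := by
  have hdvd : k.gcd n ∣ n := Int.natCast_dvd_natCast.1 (Int.gcd_dvd_right ..)
  rw [hζ.ramanujanSum_eq_sum_moebius hn.ne_zero, ← sum_divisors_moebius_div_mul_eq_totient, mul_sum]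
  refine sum_congr rfl fun m hm => ?_
  rw [moebius_div_eq_mul_moebius_div hn hdvd (Nat.dvd_of_mem_divisors hm)]
  push_cast
  ring

theorem ramanujanSum_eq_add_sum_jacobiSym (ζ : K) (n : ℕ) (k : ℤ) :
    ramanujanSum ζ n k = ∑ a ∈ range n with J((a : ℕ) | n) = 1, ζ ^ (k * a) +
      ∑ a ∈ range n with J((a : ℕ) | n) = -1, ζ ^ (k * a) := by
  rcases eq_or_ne n 0 with rfl | hn
  · simp [ramanujanSum]
  have : NeZero n := ⟨hn⟩
  rw [ramanujanSum, sum_filter, sum_filter, sum_filter, ← sum_add_distrib]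
  refine sum_congr rfl fun a _ => ?_
  by_cases ha : a.Coprime n
  · rcases jacobiSym.eq_one_or_neg_one (a := a) (b := n) (by rwa [Int.gcd_natCast_natCast])
      with h | h <;> simp [ha, h]
  · have h : J(a | n) = 0 :=
      jacobiSym.eq_zero_iff_not_coprime.2 (by rwa [Int.gcd_natCast_natCast])
    simp [ha, h]

theorem jacobiSym_mul_mod (a b n : ℕ) : J((a * b % n : ℕ) | n) = J(a | n) * J(b | n) := by
  rw [Int.natCast_mod, ← jacobiSym.mod_left, Nat.cast_mul, jacobiSym.mul_left]

theorem IsPrimitiveRoot.sum_jacobiSym_eq_one_eq_sum_jacobiSym_eq_neg_one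
    (hζ : IsPrimitiveRoot ζ n) (k : ℤ) {b : ℕ} (hb : J(b | n) = -1)
    (hkb : (n : ℤ) ∣ k * (b - 1)) :
    ∑ a ∈ range n with J((a : ℕ) | n) = 1, ζ ^ (k * a) =
      ∑ a ∈ range n with J((a : ℕ) | n) = -1, ζ ^ (k * a) := by
  have hn : n ≠ 0 := by
    rintro rfl
    simp at hb
  have : NeZero n := ⟨hn⟩
  have hbn : b.Coprime n := by
    by_contra h
    rw [Nat.Coprime, ← Int.gcd_natCast_natCast] at h
    simp [jacobiSym.eq_zero_iff_not_coprime.2 h] at hb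
  rw [sum_filter, sum_filter, ← sum_range_mul_mod hbn]
  refine sum_congr rfl fun a _ => ?_
  have hζ : ζ ^ (k * (b * a % n : ℕ)) = ζ ^ (k * a) := by
    apply hζ.zpow_eq_zpow_of_modEq hn
    calc k * (b * a % n : ℕ) ≡ k * (b * a : ℕ) [ZMOD n] :=
          (Int.natCast_modEq_iff.2 (Nat.mod_modEq _ _)).mul_left k
      _ ≡ k * a [ZMOD n] := Int.modEq_iff_dvd.2 <| by
          rw [← dvd_neg]
          convert dvd_mul_of_dvd_left hkb a using 1
          push_cast
          ring
  simp only [jacobiSym_mul_mod, hb, hζ, neg_one_mul, neg_eq_iff_eq_neg]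

end RootsOfUnity

theorem exists_jacobiSym_eq_neg_one_modEq_one {p m : ℕ} (hp : p.Prime) (hp2 : p ≠ 2)
    (hpm : p.Coprime m) : ∃ b : ℕ, J(b | p * m) = -1 ∧ b ≡ 1 [MOD m] := by
  have : Fact p.Prime := ⟨hp⟩
  obtain ⟨x, hx⟩ := FiniteField.exists_nonsquare (F := ZMod p) (by rwa [ZMod.ringChar_zmod_n])
  have hxp : J(x.val | p) = -1 := by
    rwa [ZMod.nonsquare_iff_jacobiSym_eq_neg_one, Int.cast_natCast, ZMod.natCast_zmod_val]
  obtain ⟨b, hbp, hbm⟩ := Nat.chineseRemainder hpm x.val 1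
  refine ⟨b, ?_, hbm⟩
  have hm : m ≠ 0 := by
    rintro rfl
    exact hp.one_lt.ne' (Nat.coprime_zero_right _ |>.1 hpm)
  rw [jacobiSym.mul_right' _ hp.ne_zero hm, jacobiSym.mod_left' (Int.natCast_modEq_iff.2 hbp), hxp,
    jacobiSym.mod_left' (Int.natCast_modEq_iff.2 hbm), Nat.cast_one, jacobiSym.one_left, mul_one]

theorem exists_jacobiSym_eq_neg_one_dvd_mul_sub_one {n : ℕ} (hodd : Odd n) (hsf : Squarefree n)
    {k : ℤ} (hk : 1 < k.gcd n) : ∃ b : ℕ, J(b | n) = -1 ∧ (n : ℤ) ∣ k * (b - 1) := by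
  set p := (k.gcd n).minFac
  have hp : p.Prime := Nat.minFac_prime hk.ne'
  have hpk : (p : ℤ) ∣ k :=
    (Int.natCast_dvd_natCast.2 (Nat.minFac_dvd _)).trans (Int.gcd_dvd_left ..)
  have hpn : p ∣ n := (Nat.minFac_dvd _).trans (Int.natCast_dvd_natCast.1 (Int.gcd_dvd_right ..))
  obtain ⟨m, hnm⟩ := hpn
  have hp2 : p ≠ 2 := by
    rintro h
    rw [h] at hnm
    exact Nat.not_even_iff_odd.2 hodd (hnm ▸ even_two_mul m)
  obtain ⟨b, hb, hbm⟩ := exists_jacobiSym_eq_neg_one_modEq_one hp hp2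
    (Nat.coprime_of_squarefree_mul (hnm ▸ hsf))
  refine ⟨b, hnm ▸ hb, ?_⟩
  rw [hnm, Nat.cast_mul]
  exact mul_dvd_mul hpk (Nat.modEq_iff_dvd.1 hbm.symm)

theorem stmt1_general (d : ℕ) (hodd : Odd d) (hsf : Squarefree d)
    (k : ℤ) (f : ℕ) (hf : f = Int.gcd k d) (h1 : 1 < f) :
    ∑ a ∈ (Finset.Icc 1 d).filter (fun a : ℕ => jacobiSym (a : ℤ) d = 1), zeta d ^ (k * a) =
      (ArithmeticFunction.moebius (d / f) : ℂ) * (Nat.totient f : ℂ) / 2 := by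
  subst hf
  have hζ : IsPrimitiveRoot (zeta d) d := Complex.isPrimitiveRoot_exp d hsf.ne_zero
  obtain ⟨b, hb, hkb⟩ := exists_jacobiSym_eq_neg_one_dvd_mul_sub_one hodd hsf h1
  have hsplit := (ramanujanSum_eq_add_sum_jacobiSym _ d k).symm.trans
    (hζ.ramanujanSum_eq_moebius_mul_totient hsf k)
  rw [← hζ.sum_jacobiSym_eq_one_eq_sum_jacobiSym_eq_neg_one k hb hkb] at hsplit
  have hperiod : J(d | d) = J(0 | d) := jacobiSym.mod_left' (by simp)
  rw [sum_filter, sum_Icc_one_eq_sum_range _ _ (by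
    simp [hperiod, (hζ.zpow_eq_one_iff_dvd _).2 (dvd_mul_left _ _)]), ← sum_filter]
  linear_combination hsplit / 2

theorem stmt1 (d : ℕ) (hd : 3 ≤ d) (hodd : Odd d) (hsf : Squarefree d)
    (k : ℤ) (f : ℕ) (hf : f = Int.gcd k d) (h1 : 1 < f) :
    ∑ a ∈ (Finset.Icc 1 d).filter (fun a : ℕ => jacobiSym (a : ℤ) d = 1), zeta d ^ (k * a) =
      (ArithmeticFunction.moebius (d / f) : ℂ) * (Nat.totient f : ℂ) / 2 :=
  stmt1_general d hodd hsf k f hf h1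
end

section
/- For coprime positive odd integers d and m, the quadratic Gauss sums satisfy g_{dm,k} = (-1)^{(d-1)(m-1)/4} · g_{d,k} · g_{m,k}, where g_{n,k} = Σ_{1 ≤ a ≤ n, gcd(a,n)=1} (a/n) ζ_n^{ka}. -/
open Finset Polynomial

/-- the quadratic Gauss sum `g_{n,k}`. -/
noncomputable def gaussSum' (n : ℕ) (k : ℤ) : ℂ :=
  ∑ a ∈ (Finset.Icc 1 n).filter (fun a => Nat.gcd a n = 1),
    (jacobiSym a n : ℂ) * zeta n ^ (k * a)

/-!
Write `N = d m`. As `x` and `y` run over residues mod `d` and mod `m`, `a = m x + d y` runs over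
the residues mod `N` (Chinese remainder theorem). The Jacobi symbol is multiplicative in both
arguments and `ζ_N ^ (m x + d y) = ζ_d ^ x ζ_m ^ y`, so each term of `g_{N,k}` at `a` factors as
`(m/d)(d/m)` times the terms of `g_{d,k}` at `x` and of `g_{m,k}` at `y`; by quadratic reciprocity
`(m/d)(d/m) = (-1)^((d-1)(m-1)/4)`.
-/

lemma zeta_zpow (n : ℕ) (j : ℤ) : zeta n ^ j = Complex.exp (2 * Real.pi * Complex.I * j / n) := by
  rw [zeta, ← Complex.exp_int_mul]
  ring_nf

lemma zeta_zpow_natCast_mul {n : ℕ} (hn : n ≠ 0) (t : ℤ) : zeta n ^ ((n : ℤ) * t) = 1 := by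
  rw [zeta_zpow, ← Complex.exp_int_mul_two_pi_mul_I t]
  congr 1
  push_cast
  field_simp

lemma zeta_zpow_congr {n : ℕ} (hn : n ≠ 0) {a b : ℤ} (h : a ≡ b [ZMOD n]) :
    zeta n ^ a = zeta n ^ b := by
  obtain ⟨t, ht⟩ := (Int.modEq_iff_dvd.mp h.symm)
  rw [show a = b + n * t by omega, zpow_add₀ (show zeta n ≠ 0 from Complex.exp_ne_zero _),
    zeta_zpow_natCast_mul hn, mul_one]

lemma zeta_mul_zpow_mul {d m : ℕ} (hd : d ≠ 0) (hm : m ≠ 0) (j : ℤ) :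
    zeta (d * m) ^ ((m : ℤ) * j) = zeta d ^ j := by
  rw [zeta_zpow, zeta_zpow]
  congr 1
  push_cast
  field_simp

lemma sum_Icc_one_eq_sum_zmod {M : Type*} [AddCommMonoid M] (n : ℕ) [NeZero n] (f : ZMod n → M) :
    ∑ a ∈ Icc 1 n, f a = ∑ x : ZMod n, f x := by
  refine sum_nbij' (fun a => (a : ZMod n)) (fun x => (x - 1).val + 1) (by simp) ?_ ?_ (by simp)
    (by simp)
  · intro x _
    have := (x - 1).val_lt
    simp only [mem_Icc]
    omega
  · intro a ha
    rw [mem_Icc] at ha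
    obtain ⟨b, rfl⟩ : ∃ b, a = b + 1 := ⟨a - 1, by omega⟩
    simp [ZMod.val_cast_of_lt (show b < n by omega)]

lemma sum_zmod_mul_eq_sum_prod {M : Type*} [AddCommMonoid M] {d m : ℕ} [NeZero d] [NeZero m]
    (h : d.Coprime m) (f : ZMod (d * m) → M) :
    ∑ x : ZMod (d * m), f x = ∑ p : ZMod d × ZMod m, f (m * p.1.val + d * p.2.val) := by
  refine (Fintype.sum_bijective
    (fun p : ZMod d × ZMod m => (m * p.1.val + d * p.2.val : ZMod (d * m))) ?_ _ _ fun _ => rfl).symm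
  refine (Fintype.bijective_iff_injective_and_card _).mpr ⟨fun p q hpq => ?_, by simp [ZMod.card]⟩
  have hd := congrArg (ZMod.castHom (dvd_mul_right d m) (ZMod d)) hpq
  have hm := congrArg (ZMod.castHom (dvd_mul_left m d) (ZMod m)) hpq
  simp only [map_add, map_mul, map_natCast, ZMod.natCast_self, ZMod.natCast_zmod_val, zero_mul,
    add_zero, zero_add] at hd hm
  exact Prod.ext (((ZMod.isUnit_iff_coprime m d).mpr h.symm).mul_left_cancel hd)
    (((ZMod.isUnit_iff_coprime d m).mpr h).mul_left_cancel hm)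

noncomputable def gaussTerm (n : ℕ) (k a : ℤ) : ℂ := jacobiSym a n * zeta n ^ (k * a)

lemma gaussTerm_congr {n : ℕ} (hn : n ≠ 0) (k : ℤ) {a b : ℤ} (h : a ≡ b [ZMOD n]) :
    gaussTerm n k a = gaussTerm n k b := by
  rw [gaussTerm, gaussTerm, jacobiSym.mod_left' h, zeta_zpow_congr hn (h.mul_left k)]

lemma gaussTerm_intCast_val (n : ℕ) [NeZero n] (k a : ℤ) :
    gaussTerm n k (a : ZMod n).val = gaussTerm n k a := by
  refine gaussTerm_congr (NeZero.ne n) k ?_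
  rw [ZMod.val_intCast]
  exact Int.mod_modEq a n

lemma gaussSum'_eq_sum_zmod (n : ℕ) [NeZero n] (k : ℤ) :
    gaussSum' n k = ∑ x : ZMod n, gaussTerm n k x.val := by
  rw [← sum_Icc_one_eq_sum_zmod, gaussSum', sum_filter_of_ne]
  · refine sum_congr rfl fun a _ => ?_
    rw [← Int.cast_natCast (R := ZMod n), gaussTerm_intCast_val, gaussTerm]
  · intro a _ ha
    by_contra hcop
    rw [← Int.gcd_natCast_natCast] at hcop
    simp [jacobiSym.eq_zero_iff_not_coprime.mpr hcop] at ha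

lemma gaussTerm_mul_add_mul {d m : ℕ} [NeZero d] [NeZero m] (k x y : ℤ) :
    gaussTerm (d * m) k (m * x + d * y) =
      (jacobiSym m d * jacobiSym d m : ℤ) * gaussTerm d k x * gaussTerm m k y := by
  have hJd : jacobiSym (m * x + d * y) d = jacobiSym m d * jacobiSym x d := by
    rw [← jacobiSym.mul_left]
    exact jacobiSym.mod_left' (by simp)
  have hJm : jacobiSym (m * x + d * y) m = jacobiSym d m * jacobiSym y m := by
    rw [← jacobiSym.mul_left]
    exact jacobiSym.mod_left' (by simp)
  have hz : zeta (d * m) ^ (k * (m * x + d * y)) = zeta d ^ (k * x) * zeta m ^ (k * y) := by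
    rw [mul_add, zpow_add₀ (show zeta (d * m) ≠ 0 from Complex.exp_ne_zero _),
      mul_left_comm, zeta_mul_zpow_mul (NeZero.ne d) (NeZero.ne m), mul_left_comm, mul_comm d,
      zeta_mul_zpow_mul (NeZero.ne m) (NeZero.ne d)]
  simp only [gaussTerm, jacobiSym.mul_right, hJd, hJm, hz]
  push_cast
  ring

lemma jacobiSym_mul_jacobiSym_swap {d m : ℕ} (hd : Odd d) (hm : Odd m) (h : d.Coprime m) :
    jacobiSym m d * jacobiSym d m = (-1) ^ ((d - 1) * (m - 1) / 4) := by
  rw [jacobiSym.quadratic_reciprocity hm hd, mul_assoc, ← sq,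
    jacobiSym.sq_one (by rwa [Int.gcd_natCast_natCast]), mul_one]
  obtain ⟨s, rfl⟩ := hd
  obtain ⟨t, rfl⟩ := hm
  congr 1
  rw [show (2 * s + 1 - 1) * (2 * t + 1 - 1) = 4 * (t * s) by simp; ring,
    show (2 * s + 1) / 2 = s by omega, show (2 * t + 1) / 2 = t by omega]
  simp

theorem stmt2_general (d m : ℕ) (hdodd : Odd d) (hmodd : Odd m)
    (hcop : Nat.Coprime d m) (k : ℤ) :
    gaussSum' (d * m) k =
      (-1 : ℂ) ^ ((d - 1) * (m - 1) / 4) * gaussSum' d k * gaussSum' m k := by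
  have : NeZero d := ⟨hdodd.pos.ne'⟩
  have : NeZero m := ⟨hmodd.pos.ne'⟩
  have hsign := jacobiSym_mul_jacobiSym_swap hdodd hmodd hcop
  calc gaussSum' (d * m) k
      = ∑ p : ZMod d × ZMod m, gaussTerm (d * m) k (m * p.1.val + d * p.2.val) := by
        rw [gaussSum'_eq_sum_zmod, sum_zmod_mul_eq_sum_prod hcop]
        refine sum_congr rfl fun p _ => ?_
        rw [← gaussTerm_intCast_val (d * m) k (m * p.1.val + d * p.2.val)]
        push_cast
        rfl
    _ = ∑ p : ZMod d × ZMod m, (-1 : ℂ) ^ ((d - 1) * (m - 1) / 4) *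
          gaussTerm d k p.1.val * gaussTerm m k p.2.val := by
        simp_rw [gaussTerm_mul_add_mul, hsign]
        push_cast
        rfl
    _ = _ := by
        rw [gaussSum'_eq_sum_zmod d, gaussSum'_eq_sum_zmod m, mul_assoc, Fintype.sum_mul_sum,
          mul_sum, Fintype.sum_prod_type]
        simp_rw [mul_sum, mul_assoc]

theorem stmt2 (d m : ℕ) (hd : 0 < d) (hm : 0 < m) (hdodd : Odd d) (hmodd : Odd m)
    (hcop : Nat.Coprime d m) (k : ℤ) :
    gaussSum' (d * m) k =
      (-1 : ℂ) ^ ((d - 1) * (m - 1) / 4) * gaussSum' d k * gaussSum' m k :=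
  stmt2_general d m hdodd hmodd hcop k
end

section
/- Let d ≥ 5 be odd and squarefree, G_d = G_{d,⌊φ(d)/4⌋}, and Ψ_d the Gauss–Kraïtchik polynomial of degree d' = φ(d)/2 with leading coefficient 2. If x > 2G_d is real, then Ψ_d(x) ≥ 2x^{d'}(1 − Σ_{n=1}^{d'} (G_d/x)^n) > 0. -/
open Finset Polynomial

/-- `U_d^+(X) = Π_{(k/d)=1} (X - ζ_d^k)`. -/
noncomputable def Uplus (d : ℕ) : Polynomial ℂ :=
  ∏ k ∈ (Finset.Icc 1 d).filter (fun k : ℕ => jacobiSym (k : ℤ) d = 1),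
    (Polynomial.X - Polynomial.C (zeta d ^ k))

/-- `U_d^-(X) = Π_{(k/d)=-1} (X - ζ_d^k)`. -/
noncomputable def Uminus (d : ℕ) : Polynomial ℂ :=
  ∏ k ∈ (Finset.Icc 1 d).filter (fun k : ℕ => jacobiSym (k : ℤ) d = -1),
    (Polynomial.X - Polynomial.C (zeta d ^ k))

/-- `Ψ_d = U_d^+ + U_d^-`. -/
noncomputable def Psi (d : ℕ) : Polynomial ℂ := Uplus d + Uminus d

/-- `Ξ_d = (U_d^- - U_d^+)/√D`. -/
noncomputable def Xi (d : ℕ) : Polynomial ℂ :=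
  Polynomial.C (sqrtD d)⁻¹ * (Uminus d - Uplus d)

/-- `F_{d,n} = max({φ(f)/2 : f ∣ d, 1 < f ≤ n} ∪ {|1+√D|/2})`. -/
noncomputable def Fdn (d n : ℕ) : ℝ :=
  (insert (‖1 + sqrtD d‖ / 2)
      ((d.divisors.filter fun f => 1 < f ∧ f ≤ n).image fun f => (f.totient : ℝ) / 2)).max'
    (Finset.insert_nonempty _ _)

/-- `G_{d,n} = max({φ(f)/2 : f ∣ d, 1 < f ≤ n} ∪ {(1+√d)/2})`. -/
noncomputable def Gdn (d n : ℕ) : ℝ :=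
  (insert ((1 + Real.sqrt d) / 2)
      ((d.divisors.filter fun f => 1 < f ∧ f ≤ n).image fun f => (f.totient : ℝ) / 2)).max'
    (Finset.insert_nonempty _ _)

/-!
The roots of `U_d^±` are the `ζ^z` with Jacobi symbol `(z/d) = ±1`, so up to sign the coefficients
of `U_d^±` are elementary symmetric functions of unimodular numbers. Their `m`-th power sums equal
`(c_d(m) ± τ(m)) / 2`, where `c_d(m) = μ(d/g) φ(g)`, `g = gcd(d, m)`, is Ramanujan's sum, and
`τ(m)` is the Gauss sum of the Jacobi character. Because `d` is squarefree, that character is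
primitive, so `|τ(m)| = √d` if `g = 1` and `τ(m) = 0` otherwise. Hence the power sums of order
`1 ≤ m ≤ φ(d)/4` are bounded by `G_d`. Newton's identities then give `|e_n| ≤ G_d^n` for
`n ≤ φ(d)/4`. For larger `n`, `|e_{d'-n}| = |e_n|` because the roots lie on the unit circle. So
`|a_{d,n}| ≤ 2 G_d^n`, and comparing with the leading term `2x^{d'}` gives the lower bound. It is
positive because `Σ (G_d/x)^n < 1` when `x > 2 G_d`.
-/

open ComplexConjugate
open scoped ArithmeticFunction.Moebius

namespace GaussKraitchik

section JacobiCharacter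

theorem exists_modEq_one_jacobiSym_eq_neg_one {p t : ℕ} (hp : p.Prime) (hp2 : p ≠ 2)
    (hpt : p.Coprime t) : ∃ u : ℕ, u ≡ 1 [MOD t] ∧ jacobiSym u (p * t) = -1 := by
  have := Fact.mk hp
  obtain ⟨b, hb⟩ := FiniteField.exists_nonsquare (F := ZMod p) (by rwa [ZMod.ringChar_zmod_n])
  obtain ⟨u, hub, hu1⟩ := Nat.chineseRemainder hpt b.val 1
  have ht : t ≠ 0 := by rintro rfl; exact hp.one_lt.ne' (Nat.coprime_zero_right p |>.mp hpt)
  refine ⟨u, hu1, ?_⟩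
  have hJp : jacobiSym u p = -1 := by
    rw [jacobiSym.mod_left' (a₂ := (b.val : ℤ)) (by exact_mod_cast hub),
      ← jacobiSym.legendreSym.to_jacobiSym, legendreSym.eq_neg_one_iff]
    simpa using hb
  have hJt : jacobiSym u t = 1 := by
    rw [jacobiSym.mod_left' (a₂ := ((1 : ℕ) : ℤ)) (by exact_mod_cast hu1), Nat.cast_one,
      jacobiSym.one_left]
  rw [jacobiSym.mul_right' _ hp.ne_zero ht, hJp, hJt, mul_one]

def jacobiChar (d : ℕ) [NeZero d] : DirichletCharacter ℂ d where
  toFun z := jacobiSym z.val d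
  map_one' := by
    rw [ZMod.val_one_eq_one_mod, Int.natCast_mod, ← jacobiSym.mod_left, Nat.cast_one,
      jacobiSym.one_left, Int.cast_one]
  map_mul' y z := by
    rw [ZMod.val_mul, Int.natCast_mod, ← jacobiSym.mod_left, Nat.cast_mul, jacobiSym.mul_left,
      Int.cast_mul]
  map_nonunit' z hz := by
    have hgcd : z.val.gcd d ≠ 1 := fun h => hz (by simpa using (ZMod.isUnit_iff_coprime _ d).mpr h)
    rw [jacobiSym.eq_zero_iff_not_coprime.mpr (by rwa [Int.gcd_natCast_natCast]), Int.cast_zero]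

variable {d : ℕ} [NeZero d]

lemma jacobiChar_apply (z : ZMod d) : jacobiChar d z = jacobiSym z.val d := rfl

lemma jacobiChar_natCast (n : ℕ) : jacobiChar d n = jacobiSym n d := by
  rw [jacobiChar_apply, ZMod.val_natCast, Int.natCast_mod, ← jacobiSym.mod_left]

/-- A unit `u ≡ 1` modulo the conductor with `(u/d) = -1` rules out a proper conductor. -/
theorem jacobiChar_isPrimitive (hodd : Odd d) (hsf : Squarefree d) :
    (jacobiChar d).IsPrimitive := by
  obtain ⟨hcd, χ₀, hχ₀⟩ := (jacobiChar d).factorsThrough_conductor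
  obtain ⟨k, hk⟩ := id hcd
  by_contra hne
  have hk1 : k ≠ 1 := fun h => hne (by rw [DirichletCharacter.isPrimitive_def]; simp [hk, h])
  obtain ⟨p, hp, t, rfl⟩ := Nat.exists_prime_and_dvd hk1
  have hd := hk.trans (mul_left_comm _ _ _)
  have hpt : p.Coprime (_ * t) := (Nat.squarefree_mul_iff.mp (hd ▸ hsf)).1
  have hp2 : p ≠ 2 := by
    rintro rfl
    exact (Nat.not_even_iff_odd.mpr hodd) (hd ▸ even_two_mul _)
  obtain ⟨u, hu1, hu⟩ := exists_modEq_one_jacobiSym_eq_neg_one hp hp2 hpt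
  rw [← hd] at hu
  have hud : u.Coprime d := by
    by_contra h
    rw [jacobiSym.eq_zero_iff_not_coprime.mpr (by rwa [Int.gcd_natCast_natCast])] at hu
    exact absurd hu (by decide)
  have key := DirichletCharacter.changeLevel_eq_cast_of_dvd χ₀ hcd (ZMod.unitOfCoprime u hud)
  rw [← hχ₀, ZMod.coe_unitOfCoprime, jacobiChar_natCast, hu, ZMod.cast_natCast hcd,
    (ZMod.natCast_eq_natCast_iff' u 1 _).mpr ?_, Nat.cast_one, map_one] at key
  · norm_num at key
  · exact hu1.of_dvd (dvd_mul_right _ t)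

lemma jacobiChar_isQuadratic : (jacobiChar d).IsQuadratic := fun z => by
  rw [jacobiChar_apply]
  rcases jacobiSym.trichotomy z.val d with h | h | h <;> rw [h] <;> simp

lemma one_apply_eq_jacobiChar_sq (z : ZMod d) :
    (1 : DirichletCharacter ℂ d) z = jacobiChar d z ^ 2 := by
  rw [← MulChar.pow_apply' _ two_ne_zero, jacobiChar_isQuadratic.sq_eq_one]

end JacobiCharacter

section GaussSumNorm

variable {N : ℕ} [NeZero N]

lemma sum_mul_conj_eq_totient (χ : DirichletCharacter ℂ N) :
    ∑ a, χ a * conj (χ a) = N.totient := by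
  rw [← ZMod.card_units_eq_totient, ← MulChar.sum_one_eq_card_units (R' := ℂ)]
  refine sum_congr rfl fun a _ => ?_
  by_cases ha : IsUnit a
  · rw [Complex.mul_conj, Complex.normSq_eq_norm_sq, ← ha.unit_spec,
      DirichletCharacter.unit_norm_eq_one, MulChar.one_apply_coe]
    norm_num
  · rw [MulChar.map_nonunit _ ha, MulChar.map_nonunit _ ha, zero_mul]

lemma sum_gaussSum_mulShift_mul_conj (χ : DirichletCharacter ℂ N) :
    ∑ a, gaussSum χ (ZMod.stdAddChar.mulShift a) * conj (gaussSum χ (ZMod.stdAddChar.mulShift a))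
      = N * ∑ x, χ x * conj (χ x) := by
  classical
  have orth (x y : ZMod N) : ∑ a, ZMod.stdAddChar (a * x) * conj (ZMod.stdAddChar (a * y))
      = if x = y then (N : ℂ) else 0 := by
    have h (a : ZMod N) : ZMod.stdAddChar (a * x) * conj (ZMod.stdAddChar (a * y))
        = ZMod.stdAddChar (a * (x - y)) := by
      rw [← AddChar.map_neg_eq_conj, ← AddChar.map_add_eq_mul, mul_sub, sub_eq_add_neg]
    rw [sum_congr rfl fun a _ => h a, AddChar.sum_mulShift _ (ZMod.isPrimitive_stdAddChar N),
      ZMod.card]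
    by_cases hxy : x = y <;> simp [hxy, sub_eq_zero]
  have expand (a : ZMod N) :
      gaussSum χ (ZMod.stdAddChar.mulShift a) * conj (gaussSum χ (ZMod.stdAddChar.mulShift a))
        = ∑ x, ∑ y, χ x * conj (χ y) *
            (ZMod.stdAddChar (a * x) * conj (ZMod.stdAddChar (a * y))) := by
    rw [gaussSum, map_sum, sum_mul_sum]
    refine sum_congr rfl fun x _ => sum_congr rfl fun y _ => ?_
    rw [AddChar.mulShift_apply, AddChar.mulShift_apply, map_mul (starRingEnd ℂ)]
    ring
  calc ∑ a, gaussSum χ (ZMod.stdAddChar.mulShift a) * conj (gaussSum χ (ZMod.stdAddChar.mulShift a))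
      = ∑ x, ∑ y, χ x * conj (χ y) *
          ∑ a, ZMod.stdAddChar (a * x) * conj (ZMod.stdAddChar (a * y)) := by
        simp_rw [expand, mul_sum]
        rw [sum_comm]
        exact sum_congr rfl fun x _ => sum_comm
    _ = N * ∑ x, χ x * conj (χ x) := by
        simp_rw [orth, mul_ite, mul_zero, sum_ite_eq, mem_univ, if_true,
          mul_sum, mul_comm]

/-- Both sides of `sum_gaussSum_mulShift_mul_conj` are computed: for primitive `χ` the left one is
`φ(N) ‖τ‖²`, the right one is `N φ(N)`. -/
theorem norm_gaussSum_sq_of_isPrimitive {χ : DirichletCharacter ℂ N} (hχ : χ.IsPrimitive) :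
    ‖gaussSum χ ZMod.stdAddChar‖ ^ 2 = N := by
  have h := sum_gaussSum_mulShift_mul_conj χ
  simp only [gaussSum_mulShift_of_isPrimitive _ hχ, map_mul (starRingEnd ℂ),
    mul_mul_mul_comm _ (gaussSum χ _), ← sum_mul] at h
  rw [sum_mul_conj_eq_totient, sum_mul_conj_eq_totient, Complex.mul_conj,
    Complex.normSq_eq_norm_sq] at h
  have hφ : (N.totient : ℂ) ≠ 0 := by exact_mod_cast (Nat.totient_pos.mpr (NeZero.pos N)).ne'
  exact_mod_cast mul_left_cancel₀ hφ (h.trans (mul_comm _ _))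

end GaussSumNorm

section RamanujanSum

open ArithmeticFunction

variable {d : ℕ} [NeZero d]

lemma one_apply_eq_sum_moebius (z : ZMod d) :
    (1 : DirichletCharacter ℂ d) z = ∑ t ∈ d.divisors with t ∣ z.val, (μ t : ℂ) := by
  have hfilter : {t ∈ d.divisors | t ∣ z.val} = (d.gcd z.val).divisors := by
    rw [← Nat.divisors_filter_dvd_of_dvd (NeZero.ne d) (Nat.gcd_dvd_left d z.val)]
    refine filter_congr fun t ht => ?_
    rw [Nat.dvd_gcd_iff, and_iff_right (Nat.dvd_of_mem_divisors ht)]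
  have hmoeb := congrArg (fun f : ArithmeticFunction ℂ => f (d.gcd z.val))
    (coe_moebius_mul_coe_zeta (R := ℂ))
  simp only [coe_mul_zeta_apply, intCoe_apply, one_apply] at hmoeb
  rw [hfilter, hmoeb]
  by_cases hz : IsUnit z
  · rw [MulChar.one_apply hz, if_pos]
    rw [Nat.gcd_comm]
    simpa using (ZMod.isUnit_iff_coprime z.val d).mp (by simpa using hz)
  · rw [MulChar.map_nonunit _ hz, if_neg]
    rw [Nat.gcd_comm]
    exact fun h => hz (by simpa using (ZMod.isUnit_iff_coprime z.val d).mpr h)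

lemma sum_stdAddChar_mul_of_dvd_val {t : ℕ} (ht : t ∣ d) (a : ZMod d) :
    ∑ z with t ∣ z.val, ZMod.stdAddChar (a * z)
      = if a * (t : ZMod d) = 0 then ((d / t : ℕ) : ℂ) else 0 := by
  have ht0 : 0 < t := Nat.pos_of_dvd_of_pos ht (NeZero.pos d)
  have hlt {w : ℕ} (hw : w < d / t) : t * w < d := by
    calc t * w < t * (d / t) := Nat.mul_lt_mul_of_pos_left hw ht0
      _ = d := Nat.mul_div_cancel' ht
  have hmul (w : ℕ) :
      ZMod.stdAddChar (a * ((t * w : ℕ) : ZMod d)) = ZMod.stdAddChar (a * (t : ZMod d)) ^ w := by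
    rw [← AddChar.map_nsmul_eq_pow, nsmul_eq_mul]
    push_cast
    ring_nf
  calc ∑ z with t ∣ z.val, ZMod.stdAddChar (a * z)
      = ∑ w ∈ range (d / t), ZMod.stdAddChar (a * (t : ZMod d)) ^ w := by
        refine sum_nbij' (fun z => z.val / t) (fun w => ((t * w : ℕ) : ZMod d))
          ?_ ?_ ?_ ?_ ?_ <;> intro x hx <;>
          simp only [mem_filter_univ, mem_range] at hx ⊢
        · exact Nat.div_lt_div_of_lt_of_dvd ht (ZMod.val_lt x)
        · rw [ZMod.val_natCast_of_lt (hlt hx)]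
          exact dvd_mul_right t x
        · simp [Nat.mul_div_cancel' hx]
        · rw [ZMod.val_natCast_of_lt (hlt hx), Nat.mul_div_cancel_left x ht0]
        · rw [← hmul, Nat.mul_div_cancel' hx, ZMod.natCast_zmod_val]
    _ = if a * (t : ZMod d) = 0 then ((d / t : ℕ) : ℂ) else 0 := by
        split_ifs with hat
        · simp [hat]
        · have hne : ZMod.stdAddChar (a * (t : ZMod d)) ≠ 1 := fun h =>
            hat (ZMod.injective_stdAddChar (h.trans (AddChar.map_zero_eq_one _).symm))
          rw [geom_sum_eq hne, ← hmul, Nat.mul_div_cancel' ht, ZMod.natCast_self, mul_zero,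
            AddChar.map_zero_eq_one, sub_self, zero_div]

lemma gaussSum_one_mulShift (a : ZMod d) :
    gaussSum (1 : DirichletCharacter ℂ d) (ZMod.stdAddChar.mulShift a)
      = ∑ t ∈ d.divisors, (μ t : ℂ) * if a * (t : ZMod d) = 0 then ((d / t : ℕ) : ℂ) else 0 := by
  simp_rw [gaussSum, AddChar.mulShift_apply, one_apply_eq_sum_moebius, sum_mul,
    sum_filter]
  rw [sum_comm]
  refine sum_congr rfl fun t ht => ?_
  rw [← sum_stdAddChar_mul_of_dvd_val (Nat.dvd_of_mem_divisors ht), mul_sum,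
    sum_filter]

lemma sum_moebius_div_mul_eq_totient (n : ℕ) :
    ∑ s ∈ n.divisors, μ (n / s) * (s : ℤ) = n.totient := by
  rcases n.eq_zero_or_pos with rfl | hn
  · simp
  have key := (sum_eq_iff_sum_mul_moebius_eq (R := ℤ) (f := fun k => (k.totient : ℤ))
    (g := fun k => (k : ℤ))).mp (fun k _ => by exact_mod_cast Nat.sum_totient k) n hn
  rw [← key, ← Nat.sum_divisorsAntidiagonal' (fun a b => μ a * (b : ℤ))]
  simp

/-- `gaussSum 1 (stdAddChar.mulShift m)` is Ramanujan's sum `c_d(m)`; this is von Sterneck's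
formula for squarefree `d`. -/
theorem gaussSum_one_mulShift_natCast (hsf : Squarefree d) (m : ℕ) :
    gaussSum (1 : DirichletCharacter ℂ d) (ZMod.stdAddChar.mulShift (m : ZMod d))
      = μ (d / d.gcd m) * (d.gcd m).totient := by
  set g := d.gcd m
  have hd0 := NeZero.ne d
  have hg : g ∣ d := Nat.gcd_dvd_left d m
  have hcond {t : ℕ} (ht : t ∣ d) : (m : ZMod d) * t = 0 ↔ d / t ∣ m := by
    rw [← Nat.cast_mul, ZMod.natCast_eq_zero_iff, Nat.div_dvd_iff_dvd_mul ht
      (Nat.pos_of_dvd_of_pos ht (NeZero.pos d)), mul_comm]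
  have hsplit {s : ℕ} (hs : s ∣ g) : μ (d / s) = μ (d / g) * μ (g / s) := by
    have hds : d / s = d / g * (g / s) :=
      Nat.div_eq_of_eq_mul_left (Nat.pos_of_dvd_of_pos (hs.trans hg) (NeZero.pos d))
        (by rw [mul_assoc, Nat.div_mul_cancel hs, Nat.div_mul_cancel hg])
    rw [hds, isMultiplicative_moebius.map_mul_of_coprime]
    have hsq := hsf.squarefree_of_dvd (Nat.div_dvd_of_dvd (hs.trans hg))
    exact (Nat.squarefree_mul_iff.mp (hds ▸ hsq)).1
  calc gaussSum (1 : DirichletCharacter ℂ d) (ZMod.stdAddChar.mulShift (m : ZMod d))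
      = ∑ s ∈ d.divisors, if s ∣ m then (μ (d / s) : ℂ) * s else 0 := by
        rw [gaussSum_one_mulShift, ← Nat.sum_div_divisors]
        refine sum_congr rfl fun t ht => ?_
        have ht' := Nat.dvd_of_mem_divisors ht
        simp_rw [hcond (Nat.div_dvd_of_dvd ht'), Nat.div_div_self ht' hd0]
        split_ifs <;> simp
    _ = ∑ s ∈ g.divisors, (μ (d / s) : ℂ) * s := by
        rw [← sum_filter, ← Nat.divisors_filter_dvd_of_dvd hd0 hg]
        refine sum_congr (filter_congr fun s hs => ?_) fun _ _ => rfl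
        rw [Nat.dvd_gcd_iff, and_iff_right (Nat.dvd_of_mem_divisors hs)]
    _ = μ (d / g) * g.totient := by
        have htot := congrArg (Int.cast : ℤ → ℂ) (sum_moebius_div_mul_eq_totient g)
        push_cast at htot
        rw [← htot, mul_sum]
        refine sum_congr rfl fun s hs => ?_
        rw [hsplit (Nat.dvd_of_mem_divisors hs)]
        push_cast
        ring

end RamanujanSum

section PowerSums

lemma one_add_sqrt_le_two_mul_Gdn (d n : ℕ) : 1 + Real.sqrt d ≤ 2 * Gdn d n := by
  have h : (1 + Real.sqrt d) / 2 ≤ Gdn d n := le_max' _ _ (mem_insert_self _ _)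
  linarith

lemma one_le_Gdn {d : ℕ} (hd : 1 ≤ d) (n : ℕ) : 1 ≤ Gdn d n := by
  have h1 : 1 ≤ Real.sqrt d := Real.one_le_sqrt.mpr (by exact_mod_cast hd)
  linarith [one_add_sqrt_le_two_mul_Gdn d n]

variable {d : ℕ} [NeZero d]

lemma totient_le_two_mul_Gdn {n f : ℕ} (hf : f ∣ d) (hf1 : 1 < f) (hfn : f ≤ n) :
    (f.totient : ℝ) ≤ 2 * Gdn d n := by
  have hmem : f ∈ d.divisors.filter fun f => 1 < f ∧ f ≤ n := by
    simp [hf, hf1, hfn, NeZero.ne d]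
  have h : (f.totient : ℝ) / 2 ≤ Gdn d n :=
    le_max' _ _ (mem_insert_of_mem
      (mem_image_of_mem (fun f : ℕ => (f.totient : ℝ) / 2) hmem))
  linarith

noncomputable def jacobiFiber (d : ℕ) [NeZero d] (ε : ℤ) : Finset (ZMod d) :=
  {z | jacobiChar d z = ε}

/-- `1 z + ε χ z` is twice the indicator function of `χ z = ε`. -/
lemma two_mul_sum_jacobiFiber_pow {ε : ℤ} (hε : ε = 1 ∨ ε = -1) (m : ℕ) :
    2 * ∑ z ∈ jacobiFiber d ε, ZMod.stdAddChar z ^ m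
      = gaussSum (1 : DirichletCharacter ℂ d) (ZMod.stdAddChar.mulShift (m : ZMod d))
        + ε * gaussSum (jacobiChar d) (ZMod.stdAddChar.mulShift (m : ZMod d)) := by
  simp_rw [gaussSum, mul_sum, ← sum_add_distrib, jacobiFiber, sum_filter,
    one_apply_eq_jacobiChar_sq, AddChar.mulShift_apply, ← AddChar.map_nsmul_eq_pow, nsmul_eq_mul]
  refine sum_congr rfl fun z _ => ?_
  rcases jacobiChar_isQuadratic z with h | h | h <;> rcases hε with rfl | rfl <;>
    norm_num [h] <;> ring

theorem card_jacobiFiber (hd : 1 < d) (hodd : Odd d) (hsf : Squarefree d) {ε : ℤ}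
    (hε : ε = 1 ∨ ε = -1) : (jacobiFiber d ε).card = d.totient / 2 := by
  have hχ : jacobiChar d ≠ 1 := by
    rw [Ne, DirichletCharacter.eq_one_iff_conductor_eq_one, jacobiChar_isPrimitive hodd hsf]
    exact hd.ne'
  have h := two_mul_sum_jacobiFiber_pow (d := d) hε 0
  simp only [pow_zero, sum_const, nsmul_one, Nat.cast_zero, AddChar.mulShift_zero,
    gaussSum_one_one, gaussSum_one_right hχ, mul_zero, add_zero] at h
  rw [Nat.card_eq_fintype_card, ZMod.card_units_eq_totient] at h
  have h' : 2 * (jacobiFiber d ε).card = d.totient := by exact_mod_cast h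
  omega

theorem norm_sum_jacobiFiber_pow_le (hodd : Odd d) (hsf : Squarefree d) {ε : ℤ}
    (hε : ε = 1 ∨ ε = -1) {m n : ℕ} (hm : 1 ≤ m) (hmn : m ≤ n) :
    ‖∑ z ∈ jacobiFiber d ε, ZMod.stdAddChar z ^ m‖ ≤ Gdn d n := by
  have hχ := jacobiChar_isPrimitive hodd hsf
  set g := d.gcd m
  have hsplit : 2 * ‖∑ z ∈ jacobiFiber d ε, ZMod.stdAddChar z ^ m‖
      ≤ g.totient + ‖(jacobiChar d)⁻¹ m‖ * Real.sqrt d := by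
    have hτ : ‖gaussSum (jacobiChar d) ZMod.stdAddChar‖ = Real.sqrt d := by
      rw [← norm_gaussSum_sq_of_isPrimitive hχ, Real.sqrt_sq (norm_nonneg _)]
    have hR : ‖gaussSum (1 : DirichletCharacter ℂ d) (ZMod.stdAddChar.mulShift (m : ZMod d))‖
        ≤ g.totient := by
      rw [gaussSum_one_mulShift_natCast hsf, norm_mul, Complex.norm_natCast]
      refine mul_le_of_le_one_left (Nat.cast_nonneg _) ?_
      rw [Complex.norm_intCast]
      exact_mod_cast ArithmeticFunction.abs_moebius_le_one
    have hε' : ‖(ε : ℂ)‖ = 1 := by rcases hε with rfl | rfl <;> simp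
    calc 2 * ‖∑ z ∈ jacobiFiber d ε, ZMod.stdAddChar z ^ m‖
        = ‖2 * ∑ z ∈ jacobiFiber d ε, ZMod.stdAddChar z ^ m‖ := by simp
      _ ≤ _ := by
        rw [two_mul_sum_jacobiFiber_pow hε, gaussSum_mulShift_of_isPrimitive _ hχ]
        refine (norm_add_le _ _).trans (add_le_add hR ?_)
        rw [norm_mul, norm_mul, hε', one_mul, hτ]
  by_cases hg : g = 1
  · have := one_add_sqrt_le_two_mul_Gdn d n
    have := DirichletCharacter.norm_le_one (jacobiChar d)⁻¹ m
    rw [hg, Nat.totient_one, Nat.cast_one] at hsplit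
    nlinarith [Real.sqrt_nonneg d]
  · have hmu : ¬ IsUnit (m : ZMod d) := by
      rwa [ZMod.isUnit_iff_coprime, Nat.coprime_comm]
    rw [MulChar.map_nonunit _ hmu, norm_zero, zero_mul, add_zero] at hsplit
    have := totient_le_two_mul_Gdn (Nat.gcd_dvd_left d m)
      (lt_of_le_of_ne (Nat.gcd_pos_of_pos_left m (NeZero.pos d)) (Ne.symm hg))
      ((Nat.le_of_dvd hm (Nat.gcd_dvd_right d m)).trans hmn)
    linarith

end PowerSums

section Newton

variable {α : Type*} (A : Finset α) (f : α → ℂ)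

theorem mul_esymm_eq_sum_powerSum (n : ℕ) :
    (n : ℂ) * (A.val.map f).esymm n
      = (-1) ^ (n + 1) * ∑ a ∈ antidiagonal n with a.1 < n,
          (-1) ^ a.1 * (A.val.map f).esymm a.1 * ∑ z ∈ A, f z ^ a.2 := by
  classical
  have h := congrArg (MvPolynomial.aeval fun i : A => f i) (MvPolynomial.mul_esymm_eq_sum A ℂ n)
  have hval : (univ.val.map fun i : A => f i) = A.val.map f := by
    rw [univ_eq_attach]
    exact Multiset.attach_map_val' A.val f
  simp only [map_mul, map_natCast, map_sum, map_pow, map_neg, map_one,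
    MvPolynomial.aeval_esymm_eq_multiset_esymm, hval, MvPolynomial.psum, MvPolynomial.aeval_X] at h
  rw [h]
  simp only [univ_eq_attach]
  congr! 4 with a
  exact sum_attach A fun z => f z ^ a.2

variable {A f}

theorem norm_esymm_le_pow {G : ℝ} (hG : 1 ≤ G) {N : ℕ}
    (hpow : ∀ m, 1 ≤ m → m ≤ N → ‖∑ z ∈ A, f z ^ m‖ ≤ G) {n : ℕ} (hn : n ≤ N) :
    ‖(A.val.map f).esymm n‖ ≤ G ^ n := by
  induction n using Nat.strong_induction_on with
  | _ n ih =>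
  rcases Nat.eq_zero_or_pos n with rfl | hn0
  · simp [Multiset.esymm]
  have hterm : ∀ a ∈ {a ∈ antidiagonal n | a.1 < n},
      ‖(-1 : ℂ) ^ a.1 * (A.val.map f).esymm a.1 * ∑ z ∈ A, f z ^ a.2‖ ≤ G ^ n := by
    intro a ha
    rw [mem_filter, HasAntidiagonal.mem_antidiagonal] at ha
    rw [norm_mul, norm_mul, norm_pow, norm_neg, norm_one, one_pow, one_mul]
    calc _ ≤ G ^ a.1 * G := mul_le_mul (ih _ ha.2 (by omega)) (hpow _ (by omega) (by omega))
            (norm_nonneg _) (by positivity)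
      _ ≤ G ^ n := by rw [← pow_succ]; exact pow_le_pow_right₀ hG (by omega)
  have hcard : #{a ∈ antidiagonal n | a.1 < n} = n := by
    rw [filter_congr (q := fun a : ℕ × ℕ => a.1 ≤ n - 1) (fun a _ => by omega),
      Nat.antidiagonal_filter_fst_le_of_le (by omega), card_map, Nat.card_antidiagonal]
    omega
  have key := congrArg norm (mul_esymm_eq_sum_powerSum A f n)
  rw [norm_mul, norm_mul, norm_pow, norm_neg, norm_one, one_pow, one_mul,
    Complex.norm_natCast] at key
  have hsum := (norm_sum_le _ _).trans (sum_le_sum hterm)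
  rw [sum_const, hcard, nsmul_eq_mul, ← key] at hsum
  exact le_of_mul_le_mul_left hsum (by exact_mod_cast hn0)

theorem norm_esymm_card_sub [DecidableEq α] (hf : ∀ z ∈ A, ‖f z‖ = 1) {n : ℕ} (hn : n ≤ #A) :
    ‖(A.val.map f).esymm (#A - n)‖ = ‖(A.val.map f).esymm n‖ := by
  have hconj {s : Finset α} (hs : s ⊆ A) :
      ∏ z ∈ A \ s, f z = (∏ z ∈ A, f z) * conj (∏ z ∈ s, f z) := by
    have hunit : ∀ z ∈ s, f z * conj (f z) = 1 := fun z hz => by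
      rw [Complex.mul_conj, Complex.normSq_eq_norm_sq, hf z (hs hz)]
      norm_num
    rw [map_prod, ← prod_sdiff hs, mul_assoc, ← prod_mul_distrib, prod_eq_one hunit, mul_one]
  have hcompl : (A.val.map f).esymm (#A - n) = (∏ z ∈ A, f z) * conj ((A.val.map f).esymm n) := by
    simp only [Finset.esymm_map_val, map_sum, mul_sum]
    refine sum_nbij' (A \ ·) (A \ ·) ?_ ?_ ?_ ?_ ?_ <;> intro s hs <;>
      simp only [mem_powersetCard] at hs ⊢
    · exact ⟨sdiff_subset, by rw [card_sdiff_of_subset hs.1, hs.2]; omega⟩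
    · exact ⟨sdiff_subset, by rw [card_sdiff_of_subset hs.1, hs.2]⟩
    · exact Finset.sdiff_sdiff_eq_self hs.1
    · exact Finset.sdiff_sdiff_eq_self hs.1
    · rw [← hconj sdiff_subset, Finset.sdiff_sdiff_eq_self hs.1]
  rw [hcompl, norm_mul, norm_prod, prod_eq_one hf, one_mul, Complex.norm_conj]

theorem norm_coeff_prod_X_sub_C_le [DecidableEq α] {G : ℝ} (hG : 1 ≤ G)
    (hf : ∀ z ∈ A, ‖f z‖ = 1) (hpow : ∀ m, 1 ≤ m → m ≤ #A / 2 → ‖∑ z ∈ A, f z ^ m‖ ≤ G)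
    {i : ℕ} (hi : i ≤ #A) :
    ‖(∏ z ∈ A, (X - C (f z))).coeff i‖ ≤ G ^ (#A - i) := by
  have hprod : ∏ z ∈ A, (X - C (f z)) = ((A.val.map f).map fun r => X - C r).prod := by
    rw [prod_eq_multiset_prod, Multiset.map_map]
    rfl
  rw [hprod, Multiset.prod_X_sub_C_coeff _ (by simpa using hi), Multiset.card_map, card_val,
    norm_mul, norm_pow, norm_neg, norm_one, one_pow, one_mul]
  by_cases hk : #A - i ≤ #A / 2
  · exact norm_esymm_le_pow hG hpow hk
  · rw [← norm_esymm_card_sub hf (Nat.sub_le _ _), Nat.sub_sub_self hi]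
    exact (norm_esymm_le_pow hG hpow (by omega)).trans (pow_le_pow_right₀ hG (by omega))

end Newton

section Psi

variable {d : ℕ} [NeZero d]

lemma zeta_pow_eq_stdAddChar (k : ℕ) : zeta d ^ k = ZMod.stdAddChar (k : ZMod d) := by
  rw [zeta, ← Complex.exp_nat_mul, show (k : ZMod d) = ((k : ℤ) : ZMod d) by simp,
    ZMod.stdAddChar_coe]
  push_cast
  ring_nf

lemma prod_filter_jacobiSym_eq_prod_jacobiFiber (hd : 1 < d) {ε : ℤ} (hε : ε ≠ 0) :
    ∏ k ∈ (Icc 1 d).filter (fun k : ℕ => jacobiSym (k : ℤ) d = ε), (X - C (zeta d ^ k))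
      = ∏ z ∈ jacobiFiber d ε, (X - C (ZMod.stdAddChar z)) := by
  have hzero : jacobiSym 0 d = 0 := jacobiSym.zero_left hd
  have hself : jacobiSym d d = 0 := jacobiSym.eq_zero_iff_not_coprime.mpr
    (by rw [Int.gcd_natCast_natCast, Nat.gcd_self]; exact hd.ne')
  refine prod_nbij' (fun k => (k : ZMod d)) ZMod.val ?_ ?_ ?_ ?_ ?_ <;> intro x hx <;>
    simp only [mem_filter, mem_Icc, jacobiFiber, mem_univ, true_and] at hx ⊢
  · rw [jacobiChar_natCast, hx.2]
  · have hJ : jacobiSym x.val d = ε := by rw [jacobiChar_apply] at hx; exact_mod_cast hx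
    refine ⟨⟨Nat.one_le_iff_ne_zero.mpr fun h0 => hε ?_, (ZMod.val_lt x).le⟩, hJ⟩
    rw [← hJ, h0, Nat.cast_zero, hzero]
  · refine ZMod.val_natCast_of_lt (lt_of_le_of_ne hx.1.2 ?_)
    rintro rfl
    exact hε (hx.2 ▸ hself)
  · exact ZMod.natCast_zmod_val x
  · exact congrArg _ (congrArg C (zeta_pow_eq_stdAddChar x))

lemma Psi_eq (hd : 1 < d) :
    Psi d = ∏ z ∈ jacobiFiber d 1, (X - C (ZMod.stdAddChar z))
      + ∏ z ∈ jacobiFiber d (-1), (X - C (ZMod.stdAddChar z)) := by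
  rw [Psi, Uplus, Uminus, prod_filter_jacobiSym_eq_prod_jacobiFiber hd one_ne_zero,
    prod_filter_jacobiSym_eq_prod_jacobiFiber hd (by norm_num)]

lemma natDegree_prod_jacobiFiber (hd : 1 < d) (hodd : Odd d) (hsf : Squarefree d) {ε : ℤ}
    (hε : ε = 1 ∨ ε = -1) :
    (∏ z ∈ jacobiFiber d ε, (X - C (ZMod.stdAddChar z))).natDegree = d.totient / 2 := by
  rw [natDegree_prod_of_monic _ _ fun z _ => monic_X_sub_C _]
  simp [card_jacobiFiber hd hodd hsf hε]

lemma norm_coeff_prod_jacobiFiber_le (hd : 1 < d) (hodd : Odd d) (hsf : Squarefree d) {ε : ℤ}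
    (hε : ε = 1 ∨ ε = -1) {i : ℕ} (hi : i ≤ d.totient / 2) :
    ‖(∏ z ∈ jacobiFiber d ε, (X - C (ZMod.stdAddChar z))).coeff i‖
      ≤ Gdn d (d.totient / 4) ^ (d.totient / 2 - i) := by
  have hcard := card_jacobiFiber hd hodd hsf hε
  rw [← hcard] at hi ⊢
  refine norm_coeff_prod_X_sub_C_le (one_le_Gdn hd.le _) (fun z _ => AddChar.norm_apply _ _)
    (fun m hm1 hm2 => norm_sum_jacobiFiber_pow_le hodd hsf hε hm1 ?_) hi
  rwa [hcard, Nat.div_div_eq_div_mul] at hm2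

theorem natDegree_Psi_le (hd : 1 < d) (hodd : Odd d) (hsf : Squarefree d) :
    (Psi d).natDegree ≤ d.totient / 2 := by
  rw [Psi_eq hd]
  refine (natDegree_add_le _ _).trans ?_
  rw [natDegree_prod_jacobiFiber hd hodd hsf (Or.inl rfl),
    natDegree_prod_jacobiFiber hd hodd hsf (Or.inr rfl), max_self]

theorem coeff_Psi_totient_div_two (hd : 1 < d) (hodd : Odd d) (hsf : Squarefree d) :
    (Psi d).coeff (d.totient / 2) = 2 := by
  have hlead {ε : ℤ} (hε : ε = 1 ∨ ε = -1) :
      (∏ z ∈ jacobiFiber d ε, (X - C (ZMod.stdAddChar z))).coeff (d.totient / 2) = 1 := by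
    rw [← natDegree_prod_jacobiFiber hd hodd hsf hε]
    exact (monic_prod_X_sub_C _ _).coeff_natDegree
  rw [Psi_eq hd, coeff_add, hlead (Or.inl rfl), hlead (Or.inr rfl)]
  norm_num

theorem norm_coeff_Psi_le (hd : 1 < d) (hodd : Odd d) (hsf : Squarefree d) {i : ℕ}
    (hi : i ≤ d.totient / 2) :
    ‖(Psi d).coeff i‖ ≤ 2 * Gdn d (d.totient / 4) ^ (d.totient / 2 - i) := by
  rw [Psi_eq hd, coeff_add, two_mul]
  exact (norm_add_le _ _).trans (add_le_add
    (norm_coeff_prod_jacobiFiber_le hd hodd hsf (Or.inl rfl) hi)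
    (norm_coeff_prod_jacobiFiber_le hd hodd hsf (Or.inr rfl) hi))

end Psi

section RealBound

theorem le_eval_of_abs_coeff_le {p : ℝ[X]} {n : ℕ} {a G x : ℝ} (hdeg : p.natDegree ≤ n)
    (hlead : p.coeff n = a) (hcoeff : ∀ i < n, |p.coeff i| ≤ a * G ^ (n - i)) (hx : 0 < x) :
    a * x ^ n * (1 - ∑ k ∈ Icc 1 n, (G / x) ^ k) ≤ p.eval x := by
  have hreflect : a * x ^ n * ∑ k ∈ Icc 1 n, (G / x) ^ k
      = ∑ i ∈ range n, a * G ^ (n - i) * x ^ i := by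
    have hrefl : ∑ i ∈ range n, (G / x) ^ (n - i) = ∑ k ∈ Icc 1 n, (G / x) ^ k := by
      rw [range_eq_Ico, sum_Ico_reflect _ 0 (Nat.le_succ n), Nat.add_sub_cancel_left,
        Nat.sub_zero, Ico_add_one_right_eq_Icc]
    rw [← hrefl, mul_sum]
    refine sum_congr rfl fun i hi => ?_
    rw [div_pow, ← Nat.sub_add_cancel (mem_range.mp hi).le, pow_add, Nat.add_sub_cancel]
    field_simp
  have hlow : -∑ i ∈ range n, a * G ^ (n - i) * x ^ i ≤ ∑ i ∈ range n, p.coeff i * x ^ i := by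
    rw [← sum_neg_distrib]
    refine sum_le_sum fun i hi => ?_
    rw [← neg_mul]
    exact mul_le_mul_of_nonneg_right (neg_le_of_abs_le (hcoeff i (mem_range.mp hi)))
      (pow_nonneg hx.le i)
  rw [eval_eq_sum_range' (Nat.lt_succ_of_le hdeg), sum_range_succ, hlead, mul_sub, mul_one,
    hreflect]
  linarith

theorem one_sub_sum_pow_pos {r : ℝ} (hr0 : 0 ≤ r) (hr : r < 1 / 2) (n : ℕ) :
    0 < 1 - ∑ k ∈ Icc 1 n, r ^ k := by
  have hgeom := geom_sum_Ico_le_of_lt_one (m := 1) (n := n + 1) hr0 (by linarith)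
  rw [Ico_add_one_right_eq_Icc, pow_one, le_div_iff₀ (by linarith)] at hgeom
  nlinarith

end RealBound

end GaussKraitchik

open GaussKraitchik

theorem stmt18 (d : ℕ) (hd : 5 ≤ d) (hodd : Odd d) (hsf : Squarefree d)
    (Ψ : Polynomial ℝ) (hΨ : Ψ.map (algebraMap ℝ ℂ) = Psi d)
    (x : ℝ) (hx : 2 * Gdn d (d.totient / 4) < x) :
    Ψ.eval x ≥ 2 * x ^ (d.totient / 2) *
        (1 - ∑ n ∈ Finset.Icc 1 (d.totient / 2), (Gdn d (d.totient / 4) / x) ^ n) ∧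
    0 < 2 * x ^ (d.totient / 2) *
        (1 - ∑ n ∈ Finset.Icc 1 (d.totient / 2), (Gdn d (d.totient / 4) / x) ^ n) := by
  have : NeZero d := ⟨by omega⟩
  have hd1 : 1 < d := by omega
  set G := Gdn d (d.totient / 4)
  have hG : 1 ≤ G := one_le_Gdn hd1.le _
  have hx0 : 0 < x := by linarith
  have hcoeff (i : ℕ) : (Ψ.coeff i : ℂ) = (Psi d).coeff i := by
    rw [← hΨ, coeff_map]
    rfl
  have hdeg : Ψ.natDegree ≤ d.totient / 2 := by
    rw [← natDegree_map_eq_of_injective (algebraMap ℝ ℂ).injective, hΨ]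
    exact natDegree_Psi_le hd1 hodd hsf
  have hlead : Ψ.coeff (d.totient / 2) = 2 := by
    exact_mod_cast (hcoeff _).trans (coeff_Psi_totient_div_two hd1 hodd hsf)
  have hbound (i : ℕ) (hi : i < d.totient / 2) : |Ψ.coeff i| ≤ 2 * G ^ (d.totient / 2 - i) := by
    rw [← Real.norm_eq_abs, ← Complex.norm_real, hcoeff]
    exact norm_coeff_Psi_le hd1 hodd hsf hi.le
  refine ⟨le_eval_of_abs_coeff_le hdeg hlead hbound hx0, mul_pos (by positivity) ?_⟩
  exact one_sub_sum_pow_pos (by positivity) (by rw [div_lt_iff₀ hx0]; linarith) _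
end
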